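/- arXiv:2105.13051 — 2 statements merged into one kernel-verified Lean document; each statement's English description precedes it below -/
import Mathlib

section
/- Let V be the 6-dimensional real Lie algebra with complexified dual spanned by η¹, η², η³, η̄¹, η̄², η̄³ and differential determined by the Iwasawa structure equations dη¹ = 0, dη² = 0, dη³ = -η¹∧η², dη̄¹ = 0, dη̄² = 0, dη̄³ = -η̄¹∧η̄². Then for any (1,1)-form ω = (i/2)Σ_j α_{jj̄} ηʲ∧η̄ʲ + (1/2)Σ_{j<k}(α_{jk̄} - ᾱ_{jk̄}) ηʲ∧η̄ᵏ with complex coefficients α_{jk̄}, one has d(ω∧ω) = 0. In particular, every left-invariant Hermitian metric on the Iwasawa manifold is balanced. -/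
private lemma mul_swap_assoc' {Ω : Type*} [Ring Ω] {x y : Ω} (h : x * y = -(y * x))
    (z : Ω) : x * (y * z) = -(y * (x * z)) := by
  rw [← mul_assoc, h, neg_mul, mul_assoc]

private lemma mul_sq_assoc' {Ω : Type*} [Ring Ω] {x : Ω} (h : x * x = 0)
    (z : Ω) : x * (x * z) = 0 := by
  rw [← mul_assoc, h, zero_mul]

/-- Iwasawa manifold: in the exterior algebra over the span of
`η¹,η²,η³,η̄¹,η̄²,η̄³` with differential determined by `dη¹ = dη² = 0`,
`dη³ = -η¹∧η²` (and conjugate equations), every `(1,1)`-form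
`ω = (i/2)Σ α_{jj̄} ηʲ∧η̄ʲ + (1/2)Σ_{j<k}(α_{jk̄}-ᾱ_{jk̄}) ηʲ∧η̄ᵏ` with complex
coefficients satisfies `d(ω∧ω) = 0`: every left-invariant Hermitian metric on the
Iwasawa manifold is balanced. -/
theorem statement8 {Ω : Type*} [Ring Ω] [Algebra ℂ Ω]
    (η1 η2 η3 ηb1 ηb2 ηb3 : Ω)
    (hsq : ∀ x ∈ [η1, η2, η3, ηb1, ηb2, ηb3], x * x = 0)
    (hac : ∀ x ∈ [η1, η2, η3, ηb1, ηb2, ηb3], ∀ y ∈ [η1, η2, η3, ηb1, ηb2, ηb3],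
      x * y = -(y * x))
    (d : Ω →ₗ[ℂ] Ω)
    (hleib : ∀ x ∈ [η1, η2, η3, ηb1, ηb2, ηb3], ∀ y : Ω,
      d (x * y) = d x * y - x * d y)
    (hd1 : d η1 = 0) (hd2 : d η2 = 0) (hd3 : d η3 = -(η1 * η2))
    (hdb1 : d ηb1 = 0) (hdb2 : d ηb2 = 0) (hdb3 : d ηb3 = -(ηb1 * ηb2))
    (α11 α22 α33 α12 α13 α23 : ℂ)
    (ω : Ω)
    (hω : ω = (Complex.I / 2) •
        (α11 • (η1 * ηb1) + α22 • (η2 * ηb2) + α33 • (η3 * ηb3))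
      + ((1 : ℂ) / 2) •
        ((α12 - (starRingEnd ℂ) α12) • (η1 * ηb2)
          + (α13 - (starRingEnd ℂ) α13) • (η1 * ηb3)
          + (α23 - (starRingEnd ℂ) α23) • (η2 * ηb3))) :
    d (ω * ω) = 0 := by
  have L1 := hleib η1 (by simp)
  have L2 := hleib η2 (by simp)
  have L3 := hleib η3 (by simp)
  have L4 := hleib ηb1 (by simp)
  have L5 := hleib ηb2 (by simp)
  have L6 := hleib ηb3 (by simp)
  have s1 : η1 * η1 = 0 := hsq η1 (by simp)
  have s2 : η2 * η2 = 0 := hsq η2 (by simp)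
  have s3 : η3 * η3 = 0 := hsq η3 (by simp)
  have s4 : ηb1 * ηb1 = 0 := hsq ηb1 (by simp)
  have s5 : ηb2 * ηb2 = 0 := hsq ηb2 (by simp)
  have s6 : ηb3 * ηb3 = 0 := hsq ηb3 (by simp)
  have w21 : η2 * η1 = -(η1 * η2) := hac η2 (by simp) η1 (by simp)
  have w31 : η3 * η1 = -(η1 * η3) := hac η3 (by simp) η1 (by simp)
  have w32 : η3 * η2 = -(η2 * η3) := hac η3 (by simp) η2 (by simp)
  have wb11 : ηb1 * η1 = -(η1 * ηb1) := hac ηb1 (by simp) η1 (by simp)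
  have wb12 : ηb1 * η2 = -(η2 * ηb1) := hac ηb1 (by simp) η2 (by simp)
  have wb13 : ηb1 * η3 = -(η3 * ηb1) := hac ηb1 (by simp) η3 (by simp)
  have wb21 : ηb2 * η1 = -(η1 * ηb2) := hac ηb2 (by simp) η1 (by simp)
  have wb22 : ηb2 * η2 = -(η2 * ηb2) := hac ηb2 (by simp) η2 (by simp)
  have wb23 : ηb2 * η3 = -(η3 * ηb2) := hac ηb2 (by simp) η3 (by simp)
  have wb2b1 : ηb2 * ηb1 = -(ηb1 * ηb2) := hac ηb2 (by simp) ηb1 (by simp)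
  have wb31 : ηb3 * η1 = -(η1 * ηb3) := hac ηb3 (by simp) η1 (by simp)
  have wb32 : ηb3 * η2 = -(η2 * ηb3) := hac ηb3 (by simp) η2 (by simp)
  have wb33 : ηb3 * η3 = -(η3 * ηb3) := hac ηb3 (by simp) η3 (by simp)
  have wb3b1 : ηb3 * ηb1 = -(ηb1 * ηb3) := hac ηb3 (by simp) ηb1 (by simp)
  have wb3b2 : ηb3 * ηb2 = -(ηb2 * ηb3) := hac ηb3 (by simp) ηb2 (by simp)
  subst hω
  simp only [mul_add, add_mul, smul_mul_assoc, mul_smul_comm, smul_smul, smul_add,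
    map_add, map_smul, mul_assoc,
    L1, L2, L3, L4, L5, L6, hd1, hd2, hd3, hdb1, hdb2, hdb3,
    zero_mul, mul_zero, sub_zero, zero_sub, mul_neg, neg_mul, smul_neg, neg_neg,
    map_neg, map_zero, zero_add, add_zero, smul_zero,
    s1, s2, s3, s4, s5, s6, w21, w31, w32, wb11, wb12, wb13, wb21, wb22, wb23,
    wb2b1, wb31, wb32, wb33, wb3b1, wb3b2,
    mul_sq_assoc' s1, mul_sq_assoc' s2, mul_sq_assoc' s3, mul_sq_assoc' s4,
    mul_sq_assoc' s5, mul_sq_assoc' s6,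
    mul_swap_assoc' w21, mul_swap_assoc' w31, mul_swap_assoc' w32,
    mul_swap_assoc' wb11, mul_swap_assoc' wb12, mul_swap_assoc' wb13,
    mul_swap_assoc' wb21, mul_swap_assoc' wb22, mul_swap_assoc' wb23,
    mul_swap_assoc' wb2b1, mul_swap_assoc' wb31, mul_swap_assoc' wb32,
    mul_swap_assoc' wb33, mul_swap_assoc' wb3b1, mul_swap_assoc' wb3b2]
  module
end

section
/- Let φ(t) = t·A + t²·B be a curve of elements in a graded-commutative setting where A = Σ_{i=1}^{3}Σ_{j=1}^{2} a_{ij} η̄ʲ⊗Z_i and B = -(a₁₁a₂₂ - a₁₂a₂₁) η̄³⊗Z₃, on the Iwasawa Lie algebra (dη³ = -η¹∧η², other generators closed, [Z₁,Z₂] = -Z₃ the only nonzero bracket). Then φ(t) satisfies the Maurer–Cartan equation ∂̄φ(t) = (1/2)[φ(t), φ(t)] for all t. -/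
/-- Nakamura's family for the Iwasawa manifold: with
`φ(t) = t·Σ_{i=1..3, j=1..2} a_{ij} η̄ʲ⊗Z_i - t²(a₁₁a₂₂ - a₁₂a₂₁) η̄³⊗Z₃`
on the Iwasawa Lie algebra (`∂̄η̄³ = -η̄¹∧η̄²`, other generators closed,
`⁅Z₁,Z₂⁆ = -Z₃` the only nonzero bracket), the Maurer–Cartan equation
`∂̄φ(t) = (1/2)[φ(t), φ(t)]` holds for all `t`.
Here `V` is the space of `(0,1)`-vector forms with basis `b j i = η̄^{j+1}⊗Z_{i+1}`,
`W` the space of `(0,2)`-vector forms with `c j k i = η̄^{j+1}∧η̄^{k+1}⊗Z_{i+1}`,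
`dbar = ∂̄` acts on coefficients, and `Br` is the (suitably signed) symmetric bracket
of `(0,1)`-vector forms, vanishing except on the `Z₁, Z₂` components. -/
theorem statement17 {V W : Type*} [AddCommGroup V] [Module ℂ V]
    [AddCommGroup W] [Module ℂ W]
    (b : Fin 3 → Fin 3 → V)
    (c : Fin 3 → Fin 3 → Fin 3 → W)
    (hcalt : ∀ j i, c j j i = 0)
    (hcanti : ∀ j k i, c j k i = -c k j i)
    (dbar : V →ₗ[ℂ] W)
    (hdbar1 : ∀ i, dbar (b 0 i) = 0)
    (hdbar2 : ∀ i, dbar (b 1 i) = 0)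
    (hdbar3 : ∀ i, dbar (b 2 i) = -c 0 1 i)
    (Br : V →ₗ[ℂ] V →ₗ[ℂ] W)
    (hBr12 : ∀ j k, Br (b j 0) (b k 1) = c j k 2)
    (hBr21 : ∀ j k, Br (b j 1) (b k 0) = -c j k 2)
    (hBr0 : ∀ (j k : Fin 3) (i l : Fin 3), i = l ∨ i = 2 ∨ l = 2 →
      Br (b j i) (b k l) = 0)
    (a11 a12 a21 a22 a31 a32 : ℂ)
    (φ : ℂ → V)
    (hφ : ∀ t : ℂ, φ t =
      t • (a11 • b 0 0 + a12 • b 1 0 + a21 • b 0 1 + a22 • b 1 1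
        + a31 • b 0 2 + a32 • b 1 2)
      - (t ^ 2 * (a11 * a22 - a12 * a21)) • b 2 2) :
    ∀ t : ℂ, dbar (φ t) = ((1 : ℂ) / 2) • Br (φ t) (φ t) := by
  intro t
  simp only [hφ, map_sub, map_smul, map_add, hdbar1, hdbar2, hdbar3,
    LinearMap.sub_apply, LinearMap.smul_apply, LinearMap.add_apply,
    smul_zero, add_zero, zero_add, sub_zero, zero_sub,
    hBr12, hBr21, hBr0 _ _ 0 0 (Or.inl rfl), hBr0 _ _ 1 1 (Or.inl rfl),
    hBr0 _ _ 2 2 (Or.inl rfl), hBr0 _ _ 0 2 (Or.inr (Or.inr rfl)),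
    hBr0 _ _ 1 2 (Or.inr (Or.inr rfl)), hBr0 _ _ 2 0 (Or.inr (Or.inl rfl)),
    hBr0 _ _ 2 1 (Or.inr (Or.inl rfl)), hcalt, hcanti 1 0]
  module
end
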